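/- (Mild power reduction) If 0 < α < 1, 0 < ε < 1 and γ > 0, then R̃_i(M) → +∞ as M → ∞; that is, the asymptotic spectral efficiency grows without limit when the user and relay powers are scaled down more slowly than 1/M. -/

import Mathlib

/-! As the pilot, user and relay powers tend to zero, every `ω` tends to its line-of-sight part
`ψ = βK/(K+1)`, while `q_i - 1`, `Q_i` and `Z_ij` carry a vanishing power factor. So every
SINR denominator converges to a positive constant (`ψ_{AR,i} + ψ_{BR,i}` uplink, `S` downlink),
whereas the numerators grow like `M p_u ~ M^(1-α)` and `M p_r ~ M^(1-ε)`. All five rates, hence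
their minima and sums, diverge. -/

open Real Filter Topology Finset

noncomputable section

/-- `η = τ·p_p·β/(1+τ·p_p·β)`. -/
def etaP (τ pp β : ℝ) : ℝ := τ * pp * β / (1 + τ * pp * β)

/-- `ω = β(K+η)/(K+1)`. -/
def omegaP (τ pp β K : ℝ) : ℝ := β * (K + etaP τ pp β) / (K + 1)

/-- `σ² = β/((1+τ·p_p·β)(K+1))`. -/
def sigma2P (τ pp β K : ℝ) : ℝ := β / ((1 + τ * pp * β) * (K + 1))

/-- Generic interference coefficient: with `(b₁,k₁)` and `(b₂,k₂)` the two links involved,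
`b₁·b₂/((k₁+1)(k₂+1))·[(k₁+η₁)/(1+τ·p_p·b₂) + k₂·η₁ + k₁·η₂ + η₁·η₂]`.
It specializes to `ξ_{XR,ij}`, `χ_{XR,ij}` and `ζ_{XR,ij}` of (25)–(27). -/
def xiP (τ pp b1 k1 b2 k2 : ℝ) : ℝ :=
  b1 * b2 / ((k1 + 1) * (k2 + 1)) *
    ((k1 + etaP τ pp b1) / (1 + τ * pp * b2) + k2 * etaP τ pp b1
      + k1 * etaP τ pp b2 + etaP τ pp b1 * etaP τ pp b2)

variable {N : ℕ}

/-- `q_i = p_u σ²_{AR,i} + p_u σ²_{BR,i} + 1`. -/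
def qP (τ pp pu : ℝ) (βA βB KA KB : Fin N → ℝ) (i : Fin N) : ℝ :=
  pu * sigma2P τ pp (βA i) (KA i) + pu * sigma2P τ pp (βB i) (KB i) + 1

/-- `Q_i = Σ_{j≠i} p_u·(ξ_{AR,ij}+ξ_{BR,ij}+χ_{AR,ij}+χ_{BR,ij})`. -/
def QP (τ pp pu : ℝ) (βA βB KA KB : Fin N → ℝ) (i : Fin N) : ℝ :=
  ∑ j ∈ Finset.univ \ {i},
    pu * (xiP τ pp (βA i) (KA i) (βA j) (KA j) + xiP τ pp (βB i) (KB i) (βA j) (KA j)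
      + xiP τ pp (βA i) (KA i) (βB j) (KB j) + xiP τ pp (βB i) (KB i) (βB j) (KB j))

/-- `Z_{ij} = p_r·(ζ_{AR,ij}+ζ_{BR,ij})`. -/
def ZP (τ pp pr : ℝ) (βA βB KA KB : Fin N → ℝ) (i j : Fin N) : ℝ :=
  pr * (xiP τ pp (βA j) (KA j) (βA i) (KA i) + xiP τ pp (βB j) (KB j) (βA i) (KA i))

/-- `R̃_{1,i}(M)` of Theorem 1 (uplink phase). -/
def R1P (lam τ pp pu : ℝ) (βA βB KA KB : Fin N → ℝ) (i : Fin N) (M : ℝ) : ℝ :=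
  lam * logb 2 (1 +
    (M * pu * (omegaP τ pp (βA i) (KA i)) ^ 2 + M * pu * (omegaP τ pp (βB i) (KB i)) ^ 2)
      / ((omegaP τ pp (βA i) (KA i) + omegaP τ pp (βB i) (KB i)) * qP τ pp pu βA βB KA KB i
          + QP τ pp pu βA βB KA KB i))

/-- `R̃_{AR,i}(M)` of Theorem 1. -/
def RARP (lam τ pp pu : ℝ) (βA βB KA KB : Fin N → ℝ) (i : Fin N) (M : ℝ) : ℝ :=
  lam * logb 2 (1 + M * pu * (omegaP τ pp (βA i) (KA i)) ^ 2
      / ((omegaP τ pp (βA i) (KA i) + omegaP τ pp (βB i) (KB i)) * qP τ pp pu βA βB KA KB i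
          + QP τ pp pu βA βB KA KB i))

/-- `R̃_{BR,i}(M)` of Theorem 1. -/
def RBRP (lam τ pp pu : ℝ) (βA βB KA KB : Fin N → ℝ) (i : Fin N) (M : ℝ) : ℝ :=
  lam * logb 2 (1 + M * pu * (omegaP τ pp (βB i) (KB i)) ^ 2
      / ((omegaP τ pp (βA i) (KA i) + omegaP τ pp (βB i) (KB i)) * qP τ pp pu βA βB KA KB i
          + QP τ pp pu βA βB KA KB i))

/-- `R̃_{RA,i}(M)` of Theorem 1 (downlink to `U_{A,i}`). -/
def RRAP (lam τ pp pr : ℝ) (βA βB KA KB : Fin N → ℝ) (i : Fin N) (M : ℝ) : ℝ :=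
  lam * logb 2 (1 + M * pr * (omegaP τ pp (βA i) (KA i)) ^ 2
      / (∑ j, (omegaP τ pp (βA j) (KA j) + omegaP τ pp (βB j) (KB j)
          + ZP τ pp pr βA βB KA KB i j)))

/-- `R̃_{RB,i}(M)` of Theorem 1 (downlink to `U_{B,i}`). -/
def RRBP (lam τ pp pr : ℝ) (βA βB KA KB : Fin N → ℝ) (i : Fin N) (M : ℝ) : ℝ :=
  lam * logb 2 (1 + M * pr * (omegaP τ pp (βB i) (KB i)) ^ 2
      / (∑ j, (omegaP τ pp (βA j) (KA j) + omegaP τ pp (βB j) (KB j)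
          + ZP τ pp pr βA βB KA KB i j)))

/-- `R̃_{2,i}(M) = min(R̃_{AR,i}, R̃_{RB,i}) + min(R̃_{BR,i}, R̃_{RA,i})`. -/
def R2P (lam τ pp pu pr : ℝ) (βA βB KA KB : Fin N → ℝ) (i : Fin N) (M : ℝ) : ℝ :=
  min (RARP lam τ pp pu βA βB KA KB i M) (RRBP lam τ pp pr βA βB KA KB i M)
    + min (RBRP lam τ pp pu βA βB KA KB i M) (RRAP lam τ pp pr βA βB KA KB i M)

/-- `R̃_i(M) = min(R̃_{1,i}(M), R̃_{2,i}(M))`. -/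
def RtotP (lam τ pp pu pr : ℝ) (βA βB KA KB : Fin N → ℝ) (i : Fin N) (M : ℝ) : ℝ :=
  min (R1P lam τ pp pu βA βB KA KB i M) (R2P lam τ pp pu pr βA βB KA KB i M)

end

theorem Filter.Tendsto.min_atTop {ι α : Type*} [LinearOrder α] {l : Filter ι} {f g : ι → α}
    (hf : Tendsto f l atTop) (hg : Tendsto g l atTop) :
    Tendsto (fun x => min (f x) (g x)) l atTop :=
  tendsto_atTop.2 fun b =>
    ((tendsto_atTop.1 hf b).and (tendsto_atTop.1 hg b)).mono fun _ h => le_min h.1 h.2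

theorem tendsto_const_div_rpow_natCast_nhds_zero {γ : ℝ} (hγ : 0 < γ) (E : ℝ) :
    Tendsto (fun M : ℕ => E / (M : ℝ) ^ γ) atTop (𝓝 0) :=
  tendsto_const_nhds.div_atTop ((tendsto_rpow_atTop hγ).comp tendsto_natCast_atTop_atTop)

theorem tendsto_natCast_mul_const_div_rpow_atTop {E α : ℝ} (hE : 0 < E) (hα : α < 1) :
    Tendsto (fun M : ℕ => (M : ℝ) * (E / (M : ℝ) ^ α)) atTop atTop := by
  have h : Tendsto (fun M : ℕ => E * (M : ℝ) ^ (1 - α)) atTop atTop :=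
    ((tendsto_rpow_atTop (by linarith)).comp tendsto_natCast_atTop_atTop).const_mul_atTop hE
  refine h.congr' ?_
  filter_upwards [eventually_gt_atTop 0] with M hM
  have hM : (0 : ℝ) < M := by exact_mod_cast hM
  rw [rpow_sub hM, rpow_one]
  field_simp

theorem tendsto_mul_logb_one_add_div_atTop {ι : Type*} {l : Filter ι} {b lam D : ℝ}
    (hb : 1 < b) (hlam : 0 < lam) (hD : 0 < D) {num den : ι → ℝ}
    (hnum : Tendsto num l atTop) (hden : Tendsto den l (𝓝 D)) :
    Tendsto (fun x => lam * logb b (1 + num x / den x)) l atTop := by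
  have hdiv : Tendsto (fun x => num x / den x) l atTop := by
    simpa only [div_eq_mul_inv] using hnum.atTop_mul_pos (inv_pos.2 hD) (hden.inv₀ hD.ne')
  exact ((tendsto_logb_atTop hb).comp (tendsto_atTop_add_const_left l 1 hdiv)).const_mul_atTop
    hlam

noncomputable def psiP (β K : ℝ) : ℝ := β * K / (K + 1)

theorem psiP_pos {β K : ℝ} (hβ : 0 < β) (hK : 0 < K) : 0 < psiP β K := by
  unfold psiP; positivity

section VanishingPilotPower

variable {ι : Type*} {l : Filter ι} {τ : ℝ} {pp : ι → ℝ}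

theorem tendsto_one_add_mul_mul (hpp : Tendsto pp l (𝓝 0)) (β : ℝ) :
    Tendsto (fun x => 1 + τ * pp x * β) l (𝓝 1) := by
  simpa using ((hpp.const_mul τ).mul_const β).const_add 1

theorem tendsto_etaP (hpp : Tendsto pp l (𝓝 0)) (β : ℝ) :
    Tendsto (fun x => etaP τ (pp x) β) l (𝓝 0) := by
  simpa [etaP, Pi.div_def] using ((hpp.const_mul τ).mul_const β).div (tendsto_one_add_mul_mul hpp β)
    one_ne_zero

theorem tendsto_omegaP (hpp : Tendsto pp l (𝓝 0)) (β K : ℝ) :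
    Tendsto (fun x => omegaP τ (pp x) β K) l (𝓝 (psiP β K)) := by
  simpa [omegaP, psiP] using (((tendsto_etaP hpp β).const_add K).const_mul β).div_const (K + 1)

theorem tendsto_sigma2P (hpp : Tendsto pp l (𝓝 0)) (β K : ℝ) :
    Tendsto (fun x => sigma2P τ (pp x) β K) l (𝓝 (β / (K + 1))) := by
  rcases eq_or_ne (K + 1) 0 with hK | hK
  · simpa [sigma2P, hK] using tendsto_const_nhds
  · simpa [sigma2P, Pi.div_def] using
      tendsto_const_nhds.div ((tendsto_one_add_mul_mul hpp β).mul_const (K + 1)) (by simpa)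

theorem tendsto_xiP (hpp : Tendsto pp l (𝓝 0)) (b₁ k₁ b₂ k₂ : ℝ) :
    Tendsto (fun x => xiP τ (pp x) b₁ k₁ b₂ k₂) l
      (𝓝 (b₁ * b₂ / ((k₁ + 1) * (k₂ + 1)) * k₁)) := by
  have he₁ := tendsto_etaP (τ := τ) hpp b₁
  have he₂ := tendsto_etaP (τ := τ) hpp b₂
  simpa [xiP] using
    (((((he₁.const_add k₁).div (tendsto_one_add_mul_mul hpp b₂) one_ne_zero).add
      (he₁.const_mul k₂)).add (he₂.const_mul k₁)).add (he₁.mul he₂)).const_mul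
        (b₁ * b₂ / ((k₁ + 1) * (k₂ + 1)))

end VanishingPilotPower

noncomputable def uplinkDen {N : ℕ} (τ pp pu : ℝ) (βA βB KA KB : Fin N → ℝ) (i : Fin N) : ℝ :=
  (omegaP τ pp (βA i) (KA i) + omegaP τ pp (βB i) (KB i)) * qP τ pp pu βA βB KA KB i
    + QP τ pp pu βA βB KA KB i

noncomputable def downlinkDen {N : ℕ} (τ pp pr : ℝ) (βA βB KA KB : Fin N → ℝ) (i : Fin N) : ℝ :=
  ∑ j, (omegaP τ pp (βA j) (KA j) + omegaP τ pp (βB j) (KB j) + ZP τ pp pr βA βB KA KB i j)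

section VanishingPowers

variable {ι : Type*} {l : Filter ι} {τ : ℝ} {pp pu pr : ι → ℝ} {N : ℕ}
  {βA βB KA KB : Fin N → ℝ}

theorem tendsto_qP (hpp : Tendsto pp l (𝓝 0)) (hpu : Tendsto pu l (𝓝 0)) (i : Fin N) :
    Tendsto (fun x => qP τ (pp x) (pu x) βA βB KA KB i) l (𝓝 1) := by
  simpa [qP] using ((hpu.mul (tendsto_sigma2P hpp (βA i) (KA i))).add
    (hpu.mul (tendsto_sigma2P hpp (βB i) (KB i)))).add_const 1

theorem tendsto_QP (hpp : Tendsto pp l (𝓝 0)) (hpu : Tendsto pu l (𝓝 0)) (i : Fin N) :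
    Tendsto (fun x => QP τ (pp x) (pu x) βA βB KA KB i) l (𝓝 0) := by
  simpa [QP] using tendsto_finsetSum (univ \ {i}) fun j _ => hpu.mul
    ((((tendsto_xiP hpp (βA i) (KA i) (βA j) (KA j)).add
      (tendsto_xiP hpp (βB i) (KB i) (βA j) (KA j))).add
        (tendsto_xiP hpp (βA i) (KA i) (βB j) (KB j))).add
          (tendsto_xiP hpp (βB i) (KB i) (βB j) (KB j)))

theorem tendsto_ZP (hpp : Tendsto pp l (𝓝 0)) (hpr : Tendsto pr l (𝓝 0)) (i j : Fin N) :
    Tendsto (fun x => ZP τ (pp x) (pr x) βA βB KA KB i j) l (𝓝 0) := by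
  simpa [ZP] using hpr.mul ((tendsto_xiP hpp (βA j) (KA j) (βA i) (KA i)).add
    (tendsto_xiP hpp (βB j) (KB j) (βA i) (KA i)))

theorem tendsto_uplinkDen (hpp : Tendsto pp l (𝓝 0)) (hpu : Tendsto pu l (𝓝 0)) (i : Fin N) :
    Tendsto (fun x => uplinkDen τ (pp x) (pu x) βA βB KA KB i) l
      (𝓝 (psiP (βA i) (KA i) + psiP (βB i) (KB i))) := by
  simpa [uplinkDen] using (((tendsto_omegaP hpp _ _).add (tendsto_omegaP hpp _ _)).mul
    (tendsto_qP hpp hpu i)).add (tendsto_QP hpp hpu i)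

theorem tendsto_downlinkDen (hpp : Tendsto pp l (𝓝 0)) (hpr : Tendsto pr l (𝓝 0)) (i : Fin N) :
    Tendsto (fun x => downlinkDen τ (pp x) (pr x) βA βB KA KB i) l
      (𝓝 (∑ j, (psiP (βA j) (KA j) + psiP (βB j) (KB j)))) := by
  simpa [downlinkDen] using tendsto_finsetSum univ fun j _ =>
    ((tendsto_omegaP hpp (βA j) (KA j)).add (tendsto_omegaP hpp (βB j) (KB j))).add
      (tendsto_ZP hpp hpr i j)

end VanishingPowers

section Rates

variable {ι : Type*} {l : Filter ι} {lam τ : ℝ} {m pp pu pr : ι → ℝ} {N : ℕ}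
  {βA βB KA KB : Fin N → ℝ}

theorem tendsto_R1P_atTop (hlam : 0 < lam) (hpp : Tendsto pp l (𝓝 0))
    (hpu : Tendsto pu l (𝓝 0)) (hmpu : Tendsto (fun x => m x * pu x) l atTop)
    (hψA : ∀ j, 0 < psiP (βA j) (KA j)) (hψB : ∀ j, 0 < psiP (βB j) (KB j)) (i : Fin N) :
    Tendsto (fun x => R1P lam τ (pp x) (pu x) βA βB KA KB i (m x)) l atTop :=
  tendsto_mul_logb_one_add_div_atTop one_lt_two hlam (add_pos (hψA i) (hψB i))
    ((hmpu.atTop_mul_pos (pow_pos (hψA i) 2) ((tendsto_omegaP hpp _ _).pow 2)).atTop_add_atTop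
      (hmpu.atTop_mul_pos (pow_pos (hψB i) 2) ((tendsto_omegaP hpp _ _).pow 2)))
    (tendsto_uplinkDen hpp hpu i)

theorem tendsto_RARP_atTop (hlam : 0 < lam) (hpp : Tendsto pp l (𝓝 0))
    (hpu : Tendsto pu l (𝓝 0)) (hmpu : Tendsto (fun x => m x * pu x) l atTop)
    (hψA : ∀ j, 0 < psiP (βA j) (KA j)) (hψB : ∀ j, 0 < psiP (βB j) (KB j)) (i : Fin N) :
    Tendsto (fun x => RARP lam τ (pp x) (pu x) βA βB KA KB i (m x)) l atTop :=
  tendsto_mul_logb_one_add_div_atTop one_lt_two hlam (add_pos (hψA i) (hψB i))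
    (hmpu.atTop_mul_pos (pow_pos (hψA i) 2) ((tendsto_omegaP hpp _ _).pow 2))
    (tendsto_uplinkDen hpp hpu i)

theorem tendsto_RBRP_atTop (hlam : 0 < lam) (hpp : Tendsto pp l (𝓝 0))
    (hpu : Tendsto pu l (𝓝 0)) (hmpu : Tendsto (fun x => m x * pu x) l atTop)
    (hψA : ∀ j, 0 < psiP (βA j) (KA j)) (hψB : ∀ j, 0 < psiP (βB j) (KB j)) (i : Fin N) :
    Tendsto (fun x => RBRP lam τ (pp x) (pu x) βA βB KA KB i (m x)) l atTop :=
  tendsto_mul_logb_one_add_div_atTop one_lt_two hlam (add_pos (hψA i) (hψB i))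
    (hmpu.atTop_mul_pos (pow_pos (hψB i) 2) ((tendsto_omegaP hpp _ _).pow 2))
    (tendsto_uplinkDen hpp hpu i)

theorem tendsto_RRAP_atTop (hlam : 0 < lam) (hpp : Tendsto pp l (𝓝 0))
    (hpr : Tendsto pr l (𝓝 0)) (hmpr : Tendsto (fun x => m x * pr x) l atTop)
    (hψA : ∀ j, 0 < psiP (βA j) (KA j)) (hψB : ∀ j, 0 < psiP (βB j) (KB j)) (i : Fin N) :
    Tendsto (fun x => RRAP lam τ (pp x) (pr x) βA βB KA KB i (m x)) l atTop :=
  tendsto_mul_logb_one_add_div_atTop one_lt_two hlam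
    (sum_pos (fun j _ => add_pos (hψA j) (hψB j)) ⟨i, mem_univ i⟩)
    (hmpr.atTop_mul_pos (pow_pos (hψA i) 2) ((tendsto_omegaP hpp _ _).pow 2))
    (tendsto_downlinkDen hpp hpr i)

theorem tendsto_RRBP_atTop (hlam : 0 < lam) (hpp : Tendsto pp l (𝓝 0))
    (hpr : Tendsto pr l (𝓝 0)) (hmpr : Tendsto (fun x => m x * pr x) l atTop)
    (hψA : ∀ j, 0 < psiP (βA j) (KA j)) (hψB : ∀ j, 0 < psiP (βB j) (KB j)) (i : Fin N) :
    Tendsto (fun x => RRBP lam τ (pp x) (pr x) βA βB KA KB i (m x)) l atTop :=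
  tendsto_mul_logb_one_add_div_atTop one_lt_two hlam
    (sum_pos (fun j _ => add_pos (hψA j) (hψB j)) ⟨i, mem_univ i⟩)
    (hmpr.atTop_mul_pos (pow_pos (hψB i) 2) ((tendsto_omegaP hpp _ _).pow 2))
    (tendsto_downlinkDen hpp hpr i)

theorem tendsto_RtotP_atTop (hlam : 0 < lam) (hpp : Tendsto pp l (𝓝 0))
    (hpu : Tendsto pu l (𝓝 0)) (hpr : Tendsto pr l (𝓝 0))
    (hmpu : Tendsto (fun x => m x * pu x) l atTop) (hmpr : Tendsto (fun x => m x * pr x) l atTop)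
    (hψA : ∀ j, 0 < psiP (βA j) (KA j)) (hψB : ∀ j, 0 < psiP (βB j) (KB j)) (i : Fin N) :
    Tendsto (fun x => RtotP lam τ (pp x) (pu x) (pr x) βA βB KA KB i (m x)) l atTop :=
  (tendsto_R1P_atTop hlam hpp hpu hmpu hψA hψB i).min_atTop <|
    ((tendsto_RARP_atTop hlam hpp hpu hmpu hψA hψB i).min_atTop
        (tendsto_RRBP_atTop hlam hpp hpr hmpr hψA hψB i)).atTop_add_atTop
      ((tendsto_RBRP_atTop hlam hpp hpu hmpu hψA hψB i).min_atTop
        (tendsto_RRAP_atTop hlam hpp hpr hmpr hψA hψB i))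

end Rates

theorem power_scaling_mild_general
    (N : ℕ) (i : Fin N) (T τ : ℝ) (hτ : 0 < τ) (hT : τ < T)
    (lam : ℝ) (hlam : lam = (T - τ) / (2 * T))
    (Eu Er Ep : ℝ) (hEu : 0 < Eu) (hEr : 0 < Er)
    (βA βB KA KB : Fin N → ℝ)
    (hβA : ∀ j, 0 < βA j) (hβB : ∀ j, 0 < βB j)
    (hKA : ∀ j, 0 < KA j) (hKB : ∀ j, 0 < KB j)
    (α ε γ : ℝ) (hα0 : 0 < α) (hα1 : α < 1) (hε0 : 0 < ε) (hε1 : ε < 1) (hγ : 0 < γ) :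
    Tendsto (fun M : ℕ =>
        RtotP lam τ (Ep / (M : ℝ) ^ γ) (Eu / (M : ℝ) ^ α) (Er / (M : ℝ) ^ ε)
          βA βB KA KB i (M : ℝ))
      atTop atTop := by
  have hlam_pos : 0 < lam := hlam ▸ div_pos (by linarith) (by linarith)
  exact tendsto_RtotP_atTop hlam_pos
    (tendsto_const_div_rpow_natCast_nhds_zero hγ Ep)
    (tendsto_const_div_rpow_natCast_nhds_zero hα0 Eu)
    (tendsto_const_div_rpow_natCast_nhds_zero hε0 Er)
    (tendsto_natCast_mul_const_div_rpow_atTop hEu hα1)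
    (tendsto_natCast_mul_const_div_rpow_atTop hEr hε1)
    (fun j => psiP_pos (hβA j) (hKA j)) (fun j => psiP_pos (hβB j) (hKB j)) i

/-- Mild power reduction: if `0 < α < 1`, `0 < ε < 1` and `γ > 0`, then
`R̃_i(M) → +∞` as `M → ∞`: the SE grows without limit when the user and relay powers
are scaled down more slowly than `1/M`. -/
theorem power_scaling_mild
    (N : ℕ) (hN : 1 ≤ N) (i : Fin N) (T τ : ℝ) (hτ : 0 < τ) (hT : τ < T)
    (lam : ℝ) (hlam : lam = (T - τ) / (2 * T))
    (Eu Er Ep : ℝ) (hEu : 0 < Eu) (hEr : 0 < Er) (hEp : 0 < Ep)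
    (βA βB KA KB : Fin N → ℝ)
    (hβA : ∀ j, 0 < βA j) (hβB : ∀ j, 0 < βB j)
    (hKA : ∀ j, 0 < KA j) (hKB : ∀ j, 0 < KB j)
    (α ε γ : ℝ) (hα0 : 0 < α) (hα1 : α < 1) (hε0 : 0 < ε) (hε1 : ε < 1) (hγ : 0 < γ) :
    Tendsto (fun M : ℕ =>
        RtotP lam τ (Ep / (M : ℝ) ^ γ) (Eu / (M : ℝ) ^ α) (Er / (M : ℝ) ^ ε)
          βA βB KA KB i (M : ℝ))
      atTop atTop :=
  power_scaling_mild_general N i T τ hτ hT lam hlam Eu Er Ep hEu hEr βA βB KA KB hβA hβB hKA hKB α ε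
    γ hα0 hα1 hε0 hε1 hγ
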